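/- arXiv:2308.05292 — 3 statements merged into one kernel-verified Lean document; each statement's English description precedes it below -/
import Mathlib

section
/- Let F_j: ℝ^p → ℝ, j = 1,...,J, each have L-Lipschitz gradient, let F = (1/J)∑_j F_j, and let i be a uniformly random index in {1,...,J}. For points x, y, x* ∈ ℝ^p define g = ∇F_i(x) - ∇F_i(y) + ∇F(y). Then E[g] = ∇F(x) and E||g - ∇F(x)||^2 ≤ 2L^2||x - x*||^2 + 2L^2||y - x*||^2. -/
/-!
With `d_i = ∇F_i(x) - ∇F_i(y)` one has `g - ∇F(x) = d_i - E d`, so `E g = ∇F(x)` and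
`E ‖g - ∇F(x)‖²` is the variance of `d`, which is at most `E ‖d_i‖² ≤ L² ‖x - y‖²`; finally
`‖x - y‖² ≤ 2 ‖x - x*‖² + 2 ‖y - x*‖²`.
-/

open Finset

namespace Finset

variable {ι E : Type*}

theorem inv_card_smul_sum_sub_add_inv_card_smul_sum {𝕜 : Type*} [DivisionRing 𝕜]
    [AddCommGroup E] [Module 𝕜 E] (s : Finset ι) (a b : ι → E) :
    (#s : 𝕜)⁻¹ • ∑ i ∈ s, (a i - b i + (#s : 𝕜)⁻¹ • ∑ j ∈ s, b j)
      = (#s : 𝕜)⁻¹ • ∑ i ∈ s, a i := by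
  have h : (#s : 𝕜)⁻¹ * (#s * (#s : 𝕜)⁻¹) = (#s : 𝕜)⁻¹ := by
    simpa [mul_assoc] using mul_inv_mul_cancel (#s : 𝕜)⁻¹
  simp only [sum_add_distrib, sum_sub_distrib, sum_const, ← Nat.cast_smul_eq_nsmul 𝕜, smul_add,
    smul_sub, smul_smul, h, sub_add_cancel]

variable [NormedAddCommGroup E] [InnerProductSpace ℝ E]

theorem sum_norm_sub_inv_card_smul_sum_sq (s : Finset ι) (a : ι → E) :
    ∑ i ∈ s, ‖a i - (#s : ℝ)⁻¹ • ∑ j ∈ s, a j‖ ^ 2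
      = ∑ i ∈ s, ‖a i‖ ^ 2 - (#s : ℝ)⁻¹ * ‖∑ j ∈ s, a j‖ ^ 2 := by
  simp only [norm_sub_sq_real, sum_add_distrib, sum_sub_distrib, ← sum_mul, ← mul_sum, ← sum_inner,
    sum_const, nsmul_eq_mul, real_inner_smul_right, real_inner_self_eq_norm_sq, norm_smul,
    Real.norm_eq_abs, abs_inv, Nat.abs_cast, mul_pow]
  rcases eq_or_ne (#s : ℝ) 0 with hs | hs
  · simp [hs]
  · field_simp
    ring

theorem sum_norm_sub_inv_card_smul_sum_sq_le (s : Finset ι) (a : ι → E) :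
    ∑ i ∈ s, ‖a i - (#s : ℝ)⁻¹ • ∑ j ∈ s, a j‖ ^ 2 ≤ ∑ i ∈ s, ‖a i‖ ^ 2 := by
  rw [sum_norm_sub_inv_card_smul_sum_sq]
  exact sub_le_self _ (by positivity)

end Finset

theorem LipschitzWith.norm_sub_sq_le_toNNReal {E F : Type*} [SeminormedAddCommGroup E]
    [SeminormedAddCommGroup F] {f : E → F} {L : ℝ} (hf : LipschitzWith L.toNNReal f) (x y : E) :
    ‖f x - f y‖ ^ 2 ≤ L ^ 2 * ‖x - y‖ ^ 2 := by
  have hK : (L.toNNReal : ℝ) ^ 2 ≤ L ^ 2 := by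
    rw [Real.coe_toNNReal', ← sq_abs L]
    exact pow_le_pow_left₀ (le_max_right L 0) (max_le (le_abs_self L) (abs_nonneg L)) 2
  calc ‖f x - f y‖ ^ 2 ≤ ((L.toNNReal : ℝ) * ‖x - y‖) ^ 2 :=
        pow_le_pow_left₀ (norm_nonneg _) (hf.norm_sub_le x y) 2
    _ ≤ L ^ 2 * ‖x - y‖ ^ 2 := by rw [mul_pow]; gcongr

theorem norm_sub_sq_le_two_mul {E : Type*} [SeminormedAddCommGroup E] (x y z : E) :
    ‖x - y‖ ^ 2 ≤ 2 * ‖x - z‖ ^ 2 + 2 * ‖y - z‖ ^ 2 := by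
  calc ‖x - y‖ ^ 2 ≤ (‖x - z‖ + ‖y - z‖) ^ 2 := by
        gcongr
        simpa using norm_sub_le (x - z) (y - z)
    _ ≤ _ := by linarith [add_sq_le (a := ‖x - z‖) (b := ‖y - z‖)]

theorem lsvrg_variance_bound_general (p J : ℕ) (L : ℝ)
    (G : Fin J → EuclideanSpace ℝ (Fin p) → EuclideanSpace ℝ (Fin p))
    (hlip : ∀ j, LipschitzWith (Real.toNNReal L) (G j))
    (x y xs : EuclideanSpace ℝ (Fin p)) :
    (J : ℝ)⁻¹ • (∑ i, (G i x - G i y + (J : ℝ)⁻¹ • ∑ j, G j y))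
       = (J : ℝ)⁻¹ • ∑ j, G j x ∧
    (J : ℝ)⁻¹ * ∑ i, ‖(G i x - G i y + (J : ℝ)⁻¹ • ∑ j, G j y) - (J : ℝ)⁻¹ • ∑ j, G j x‖ ^ 2
      ≤ 2 * L ^ 2 * ‖x - xs‖ ^ 2 + 2 * L ^ 2 * ‖y - xs‖ ^ 2 := by
  have hJ : (#(univ : Finset (Fin J)) : ℝ) = J := by simp
  refine ⟨by simpa [hJ] using inv_card_smul_sum_sub_add_inv_card_smul_sum univ (G · x) (G · y), ?_⟩
  set d : Fin J → EuclideanSpace ℝ (Fin p) := fun i => G i x - G i y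
  have hcentred : ∀ i, G i x - G i y + (J : ℝ)⁻¹ • ∑ j, G j y - (J : ℝ)⁻¹ • ∑ j, G j x
      = d i - (J : ℝ)⁻¹ • ∑ j, d j := fun i => by
    simp only [d, sum_sub_distrib, smul_sub]
    abel
  calc (J : ℝ)⁻¹ * ∑ i, ‖G i x - G i y + (J : ℝ)⁻¹ • ∑ j, G j y - (J : ℝ)⁻¹ • ∑ j, G j x‖ ^ 2
      ≤ (J : ℝ)⁻¹ * ∑ i, ‖d i‖ ^ 2 := by
        simp only [hcentred]
        refine mul_le_mul_of_nonneg_left ?_ (by positivity)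
        simpa [hJ] using sum_norm_sub_inv_card_smul_sum_sq_le univ d
    _ ≤ (J : ℝ)⁻¹ * ∑ _i : Fin J, L ^ 2 * ‖x - y‖ ^ 2 := by
        gcongr with i
        exact (hlip i).norm_sub_sq_le_toNNReal x y
    _ = ((J : ℝ)⁻¹ * J) * (L ^ 2 * ‖x - y‖ ^ 2) := by simp [mul_assoc]
    _ ≤ L ^ 2 * ‖x - y‖ ^ 2 := mul_le_of_le_one_left (by positivity) inv_mul_le_one
    _ ≤ 2 * L ^ 2 * ‖x - xs‖ ^ 2 + 2 * L ^ 2 * ‖y - xs‖ ^ 2 := by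
        nlinarith [norm_sub_sq_le_two_mul x y xs, sq_nonneg L]

theorem lsvrg_variance_bound (p J : ℕ) [NeZero J] (L : ℝ) (hL : 0 ≤ L)
    (G : Fin J → EuclideanSpace ℝ (Fin p) → EuclideanSpace ℝ (Fin p))
    (hlip : ∀ j, LipschitzWith (Real.toNNReal L) (G j))
    (x y xs : EuclideanSpace ℝ (Fin p)) :
    (J : ℝ)⁻¹ • (∑ i, (G i x - G i y + (J : ℝ)⁻¹ • ∑ j, G j y))
       = (J : ℝ)⁻¹ • ∑ j, G j x ∧
    (J : ℝ)⁻¹ * ∑ i, ‖(G i x - G i y + (J : ℝ)⁻¹ • ∑ j, G j y) - (J : ℝ)⁻¹ • ∑ j, G j x‖ ^ 2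
      ≤ 2 * L ^ 2 * ‖x - xs‖ ^ 2 + 2 * L ^ 2 * ‖y - xs‖ ^ 2 :=
  lsvrg_variance_bound_general p J L G hlip x y xs
end

section
/- Let F_j: ℝ^p → ℝ, j = 1,...,J, each have L-Lipschitz gradient, F = (1/J)∑_j F_j, and let φ_1,...,φ_J ∈ ℝ^p be stored reference points. Let i be uniform on {1,...,J} and define g = ∇F_i(x) - ∇F_i(φ_i) + (1/J)∑_{j=1}^J ∇F_j(φ_j). Then E[g] = ∇F(x) and E||g - ∇F(x)||^2 ≤ 2L^2||x - x*||^2 + (2L^2/J)∑_{j=1}^J||φ_j - x*||^2, for any x* ∈ ℝ^p. -/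
/-!
Write `v i = ∇F_i(x) - ∇F_i(φ_i)`. The SAGA estimator is `v i` shifted by a constant, and its
mean is `∇F(x)`, so its deviation from the mean is `v i - E v`, whose second moment is at most
`E ‖v‖²`. Splitting `v i` through `x*`, the Lipschitz bound and `(a + b)² ≤ 2a² + 2b²` give
`‖v i‖² ≤ 2L²‖x - x*‖² + 2L²‖φ_i - x*‖²`.
-/

open Finset

section Average

variable {ι E : Type*} [Fintype ι]

theorem average_sub_add_average [AddCommGroup E] [Module ℝ E] (a b : ι → E) :
    (Fintype.card ι : ℝ)⁻¹ • ∑ i, (a i - b i + (Fintype.card ι : ℝ)⁻¹ • ∑ j, b j)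
      = (Fintype.card ι : ℝ)⁻¹ • ∑ i, a i := by
  set n : ℝ := (Fintype.card ι : ℝ)
  -- holds also for `n = 0`
  have hn : n⁻¹ * n * n⁻¹ = n⁻¹ := by simpa using mul_inv_mul_cancel n⁻¹
  rw [sum_add_distrib, sum_sub_distrib, sum_const, card_univ, ← Nat.cast_smul_eq_nsmul ℝ,
    smul_add, smul_smul, smul_smul, hn, smul_sub, sub_add_cancel]

variable [NormedAddCommGroup E] [InnerProductSpace ℝ E]

theorem sum_norm_sub_average_sq (v : ι → E) :
    ∑ i, ‖v i - (Fintype.card ι : ℝ)⁻¹ • ∑ j, v j‖ ^ 2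
      = ∑ i, ‖v i‖ ^ 2 - (Fintype.card ι : ℝ)⁻¹ * ‖∑ j, v j‖ ^ 2 := by
  simp only [norm_sub_sq_real, sum_add_distrib, sum_sub_distrib, ← mul_sum, ← sum_inner,
    inner_smul_right, real_inner_self_eq_norm_sq, norm_smul, sum_const, card_univ, nsmul_eq_mul,
    norm_inv, Real.norm_natCast]
  set n : ℝ := (Fintype.card ι : ℝ)
  have hn : n⁻¹ * n * n⁻¹ = n⁻¹ := by simpa using mul_inv_mul_cancel n⁻¹
  linear_combination ‖∑ j, v j‖ ^ 2 * hn

theorem sum_norm_sub_average_sq_le (v : ι → E) :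
    ∑ i, ‖v i - (Fintype.card ι : ℝ)⁻¹ • ∑ j, v j‖ ^ 2 ≤ ∑ i, ‖v i‖ ^ 2 := by
  rw [sum_norm_sub_average_sq]
  have : 0 ≤ (Fintype.card ι : ℝ)⁻¹ * ‖∑ j, v j‖ ^ 2 := by positivity
  linarith

end Average

theorem LipschitzWith.dist_sq_le {α β : Type*} [PseudoMetricSpace α] [PseudoMetricSpace β]
    {K : NNReal} {f : α → β} (hf : LipschitzWith K f) (x y z : α) :
    dist (f x) (f y) ^ 2 ≤ 2 * K ^ 2 * dist x z ^ 2 + 2 * K ^ 2 * dist y z ^ 2 := by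
  calc dist (f x) (f y) ^ 2 ≤ (dist (f x) (f z) + dist (f y) (f z)) ^ 2 := by
        gcongr; exact dist_triangle_right _ _ _
    _ ≤ 2 * (dist (f x) (f z) ^ 2 + dist (f y) (f z) ^ 2) := add_sq_le
    _ ≤ 2 * ((K * dist x z) ^ 2 + (K * dist y z) ^ 2) := by
        gcongr <;> exact hf.dist_le_mul _ _
    _ = 2 * K ^ 2 * dist x z ^ 2 + 2 * K ^ 2 * dist y z ^ 2 := by ring

theorem Real.coe_toNNReal_sq_le (r : ℝ) : (r.toNNReal : ℝ) ^ 2 ≤ r ^ 2 := by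
  rw [Real.coe_toNNReal', ← sq_abs r]
  exact pow_le_pow_left₀ (le_max_right _ _) (max_le (le_abs_self r) (abs_nonneg r)) 2

theorem saga_variance_bound_general (p J : ℕ) [NeZero J] (L : ℝ)
    (G : Fin J → EuclideanSpace ℝ (Fin p) → EuclideanSpace ℝ (Fin p))
    (hlip : ∀ j, LipschitzWith (Real.toNNReal L) (G j))
    (φ : Fin J → EuclideanSpace ℝ (Fin p))
    (x xs : EuclideanSpace ℝ (Fin p)) :
    (J : ℝ)⁻¹ • (∑ i, (G i x - G i (φ i) + (J : ℝ)⁻¹ • ∑ j, G j (φ j)))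
       = (J : ℝ)⁻¹ • ∑ j, G j x ∧
    (J : ℝ)⁻¹ * ∑ i, ‖(G i x - G i (φ i) + (J : ℝ)⁻¹ • ∑ j, G j (φ j)) - (J : ℝ)⁻¹ • ∑ j, G j x‖ ^ 2
      ≤ 2 * L ^ 2 * ‖x - xs‖ ^ 2 + (2 * L ^ 2 / J) * ∑ j, ‖φ j - xs‖ ^ 2 := by
  set v : Fin J → EuclideanSpace ℝ (Fin p) := fun i => G i x - G i (φ i)
  have hdev : ∀ i, (G i x - G i (φ i) + (J : ℝ)⁻¹ • ∑ j, G j (φ j)) - (J : ℝ)⁻¹ • ∑ j, G j x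
      = v i - (J : ℝ)⁻¹ • ∑ j, v j := by
    intro i
    simp only [v, sum_sub_distrib, smul_sub]
    abel
  have hv : ∀ i, ‖v i‖ ^ 2 ≤ 2 * L ^ 2 * ‖x - xs‖ ^ 2 + 2 * L ^ 2 * ‖φ i - xs‖ ^ 2 := by
    intro i
    have hK := Real.coe_toNNReal_sq_le L
    have := (hlip i).dist_sq_le x (φ i) xs
    simp only [dist_eq_norm] at this
    exact this.trans (by gcongr)
  refine ⟨by simpa using average_sub_add_average (fun i => G i x) (fun i => G i (φ i)), ?_⟩
  calc _ = (J : ℝ)⁻¹ * ∑ i, ‖v i - (J : ℝ)⁻¹ • ∑ j, v j‖ ^ 2 := by simp only [hdev]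
    _ ≤ (J : ℝ)⁻¹ * ∑ i, ‖v i‖ ^ 2 := by
        gcongr _ * ?_
        simpa only [Fintype.card_fin] using sum_norm_sub_average_sq_le v
    _ ≤ (J : ℝ)⁻¹ * ∑ i, (2 * L ^ 2 * ‖x - xs‖ ^ 2 + 2 * L ^ 2 * ‖φ i - xs‖ ^ 2) := by
        gcongr with i; exact hv i
    _ = 2 * L ^ 2 * ‖x - xs‖ ^ 2 + (2 * L ^ 2 / J) * ∑ j, ‖φ j - xs‖ ^ 2 := by
        have hJ : (J : ℝ) ≠ 0 := Nat.cast_ne_zero.mpr (NeZero.ne J)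
        rw [sum_add_distrib, sum_const, card_univ, Fintype.card_fin, nsmul_eq_mul, ← mul_sum]
        field_simp

theorem saga_variance_bound (p J : ℕ) [NeZero J] (L : ℝ) (hL : 0 ≤ L)
    (G : Fin J → EuclideanSpace ℝ (Fin p) → EuclideanSpace ℝ (Fin p))
    (hlip : ∀ j, LipschitzWith (Real.toNNReal L) (G j))
    (φ : Fin J → EuclideanSpace ℝ (Fin p))
    (x xs : EuclideanSpace ℝ (Fin p)) :
    (J : ℝ)⁻¹ • (∑ i, (G i x - G i (φ i) + (J : ℝ)⁻¹ • ∑ j, G j (φ j)))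
       = (J : ℝ)⁻¹ • ∑ j, G j x ∧
    (J : ℝ)⁻¹ * ∑ i, ‖(G i x - G i (φ i) + (J : ℝ)⁻¹ • ∑ j, G j (φ j)) - (J : ℝ)⁻¹ • ∑ j, G j x‖ ^ 2
      ≤ 2 * L ^ 2 * ‖x - xs‖ ^ 2 + (2 * L ^ 2 / J) * ∑ j, ‖φ j - xs‖ ^ 2 :=
  saga_variance_bound_general p J L G hlip φ x xs
end

section
/- Consider the scalar iteration where agent w's model satisfies x_w^k ∈ x_w^0 + span{ĥ_w^0, ..., ĥ_w^{k-1}}, with x_w^0 = 0, h_w^k = -λB_w (the true gradient of F_w(x) = x^2/2 - λB_w x at 0), and ĥ_w^k = h_w^k + λ∑_{v∈R_w} sign(x_w^k - x_v^k) + λ∑_{v∈B_w} sign(x_w^k - z_v^k). If all regular agents start at 0, sign(0) = 0 is used, and the Byzantine messages satisfy ∑_{v∈B_w} sign(x_w^k - z_v^k) = B_w at every k, then x_w^k = 0 for all k, and hence ||x_w^k - x_w*||^2 = λ^2 B_w^2 where x_w* = λB_w. -/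
/-
By strong induction on `k`: once every regular iterate vanishes up to step `k`, each regular
sign term is `sgn 0 = 0` and the Byzantine sign-sum `λ B_w` cancels the true gradient `-λ B_w`,
so every corrected gradient `ĥ_w^i` with `i ≤ k` is zero and the span condition pins
`x_w^{k+1}` to `x_w^0 = 0`.
-/

lemma eq_of_eq_add_sum_smul_of_forall_eq_zero {R M ι : Type*} [Semiring R] [AddCommMonoid M]
    [Module R M] {y y₀ : M} {s : Finset ι} {c : ι → R} {g : ι → M}
    (hy : y = y₀ + ∑ i ∈ s, c i • g i) (hg : ∀ i ∈ s, g i = 0) : y = y₀ := by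
  rw [hy, Finset.sum_eq_zero fun i hi => by rw [hg i hi, smul_zero], add_zero]

lemma neg_mul_add_mul_sum_sign_add_mul_eq_zero_of_consensus {ι : Type*} (lam b y₀ : ℝ)
    {s : Finset ι} {y : ι → ℝ} {sgn : ℝ → ℝ} (hsgn0 : sgn 0 = 0) (hy : ∀ v ∈ s, y v = y₀) :
    -lam * b + lam * ∑ v ∈ s, sgn (y₀ - y v) + lam * b = 0 := by
  rw [Finset.sum_eq_zero fun v hv => by rw [hy v hv, sub_self, hsgn0]]
  ring

theorem lower_bound_construction_general (R : ℕ) (lam : ℝ)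
    (B : Fin R → ℝ)
    (Rw : Fin R → Finset (Fin R))
    (sgn : ℝ → ℝ) (hsgn0 : sgn 0 = 0)
    (x : Fin R → ℕ → ℝ) (hx0 : ∀ w, x w 0 = 0)
    (byz : Fin R → ℕ → ℝ) (hbyz : ∀ w k, byz w k = B w)
    (hhat : Fin R → ℕ → ℝ)
    (hhat_def : ∀ w k, hhat w k = -lam * B w
        + lam * ∑ v ∈ Rw w, sgn (x w k - x v k) + lam * byz w k)
    (hspan : ∀ w k, ∃ c : ℕ → ℝ,
        x w (k + 1) = x w 0 + ∑ i ∈ Finset.range (k + 1), c i * hhat w i) :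
    ∀ w k, x w k = 0 ∧ (x w k - lam * B w) ^ 2 = lam ^ 2 * (B w) ^ 2 := by
  have hzero : ∀ k w, x w k = 0 := by
    intro k
    induction k using Nat.strong_induction_on with
    | _ k ih =>
      rcases k with _ | k
      · exact hx0
      intro w
      have hhat_zero : ∀ i ∈ Finset.range (k + 1), hhat w i = 0 := fun i hi => by
        have hi : i < k + 1 := Finset.mem_range.mp hi
        rw [hhat_def, hbyz, ih i hi w]
        exact neg_mul_add_mul_sum_sign_add_mul_eq_zero_of_consensus lam (B w) 0 hsgn0
          fun v _ => ih i hi v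
      obtain ⟨c, hc⟩ := hspan w k
      exact (eq_of_eq_add_sum_smul_of_forall_eq_zero (c := c) hc hhat_zero).trans (hx0 w)
  intro w k
  refine ⟨hzero k w, ?_⟩
  rw [hzero k w]
  ring

/-- Lower-bound construction (Theorem 2, scalar case): with local costs
`F_w(x) = x^2/2 - λ B_w x`, zero initialization, `sign 0 = 0`, and Byzantine
messages chosen so that each Byzantine sign-sum equals `B_w`, any method
satisfying the span condition keeps every regular iterate at `0`, hence its
squared error is `λ² B_w²`. -/
theorem lower_bound_construction (R : ℕ) (lam : ℝ) (hlam : 0 < lam)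
    (B : Fin R → ℝ) (hB : ∀ w, 0 ≤ B w)
    (Rw : Fin R → Finset (Fin R))
    (sgn : ℝ → ℝ) (hsgn0 : sgn 0 = 0) (hsgn : ∀ t, |sgn t| ≤ 1)
    (x : Fin R → ℕ → ℝ) (hx0 : ∀ w, x w 0 = 0)
    (byz : Fin R → ℕ → ℝ) (hbyz : ∀ w k, byz w k = B w)
    (hhat : Fin R → ℕ → ℝ)
    (hhat_def : ∀ w k, hhat w k = -lam * B w
        + lam * ∑ v ∈ Rw w, sgn (x w k - x v k) + lam * byz w k)
    (hspan : ∀ w k, ∃ c : ℕ → ℝ,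
        x w (k + 1) = x w 0 + ∑ i ∈ Finset.range (k + 1), c i * hhat w i) :
    ∀ w k, x w k = 0 ∧ (x w k - lam * B w) ^ 2 = lam ^ 2 * (B w) ^ 2 :=
  lower_bound_construction_general R lam B Rw sgn hsgn0 x hx0 byz hbyz hhat hhat_def hspan
end
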